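/- Let A be a bounded operator on K_θ satisfying A - S_θ A S_θ* = ψ₁ ⊗ k_0 + k_0 ⊗ χ₁ for some ψ₁, χ₁ ∈ K_θ, and suppose the closure of Ran A decomposes as a direct sum F₁ ⊕ F₂ of closed subspaces with S_θ F₁ ⊆ F₁ + span{k_0}, S_θ F₂ ⊆ F₂ + span{v} where v = ∂̄ⁿk_0 ∉ closure(Ran A) and k_0 ∈ F₂ when n ≥ 1. Let 𝒫 be the projection onto F₂ ⊕ span{v} along F₁ (defined on F₁ ⊕ F₂ ⊕ span{v}, extended appropriately). Then A₂ = 𝒫A also satisfies A₂ - S_θ A₂ S_θ* = ψ ⊗ k_0 + k_0 ⊗ χ for some ψ, χ ∈ K_θ. -/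

import Mathlib

open MeasureTheory Complex ComplexConjugate AddCircle

noncomputable section

/-- The Hardy space `H²` inside `L²` of the circle: classes whose Fourier coefficients of
negative index vanish. -/
def hardySpace (T : ℝ) [hT : Fact (0 < T)] :
    Submodule ℂ (Lp ℂ 2 (@haarAddCircle T hT)) where
  carrier := {f | ∀ n : ℤ, n < 0 → fourierBasis.repr f n = 0}
  add_mem' := by
    intro f g hf hg n hn
    simp [map_add, hf n hn, hg n hn]
  zero_mem' := by intro n hn; simp
  smul_mem' := by
    intro c f hf n hn
    simp [_root_.map_smul, hf n hn]

/-- The subspace `θH²` of `L²` of the circle. -/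
def thetaH2 (T : ℝ) [hT : Fact (0 < T)] (θ : Lp ℂ 2 (@haarAddCircle T hT)) :
    Submodule ℂ (Lp ℂ 2 (@haarAddCircle T hT)) where
  carrier := {g | ∃ f ∈ hardySpace T, (g : AddCircle T → ℂ) =ᵐ[haarAddCircle]
    fun x => (θ : AddCircle T → ℂ) x * (f : AddCircle T → ℂ) x}
  add_mem' := by
    rintro g1 g2 ⟨f1, hf1, e1⟩ ⟨f2, hf2, e2⟩
    refine ⟨f1 + f2, add_mem hf1 hf2, ?_⟩
    filter_upwards [Lp.coeFn_add g1 g2, Lp.coeFn_add f1 f2, e1, e2] with x h1 h2 h3 h4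
    simp only [Pi.add_apply, h1, h2, h3, h4]
    ring
  zero_mem' := by
    refine ⟨0, zero_mem _, ?_⟩
    filter_upwards [Lp.coeFn_zero ℂ 2 (@haarAddCircle T hT)] with x hx
    simp [hx]
  smul_mem' := by
    rintro c g ⟨f, hf, e⟩
    refine ⟨c • f, Submodule.smul_mem _ c hf, ?_⟩
    filter_upwards [Lp.coeFn_smul c g, Lp.coeFn_smul c f, e] with x h1 h2 h3
    simp only [Pi.smul_apply, h1, h2, h3, smul_eq_mul]
    ring

/-- The model space `K_θ = H² ⊖ θH²`. -/
def modelSpace (T : ℝ) [hT : Fact (0 < T)] (θ : Lp ℂ 2 (@haarAddCircle T hT)) :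
    Submodule ℂ (Lp ℂ 2 (@haarAddCircle T hT)) :=
  hardySpace T ⊓ (thetaH2 T θ)ᗮ

/-- The analytic extension of an element of `H²` to the disk, via its Taylor/Fourier series. -/
def extDisk (T : ℝ) [hT : Fact (0 < T)] (f : Lp ℂ 2 (@haarAddCircle T hT)) (z : ℂ) : ℂ :=
  ∑' n : ℕ, fourierBasis.repr f (n : ℤ) * z ^ n

/-- `θ` is an inner function: it belongs to `H²` and has unimodular boundary values a.e. -/
def IsInner (T : ℝ) [hT : Fact (0 < T)] (θ : Lp ℂ 2 (@haarAddCircle T hT)) : Prop :=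
  θ ∈ hardySpace T ∧ ∀ᵐ x ∂(@haarAddCircle T hT), ‖(θ : AddCircle T → ℂ) x‖ = 1

/-- `S` is the restricted shift `S_θ : f ↦ P_θ(z f)` on `K_θ`: for each `f ∈ K_θ` there is a
representative `zf` of `z·f` in `L²` with `zf - S f` orthogonal to `K_θ`. -/
def IsRestrictedShift (T : ℝ) [hT : Fact (0 < T)] (θ : Lp ℂ 2 (@haarAddCircle T hT))
    (S : modelSpace T θ → modelSpace T θ) : Prop :=
  ∀ f : modelSpace T θ, ∃ zf : Lp ℂ 2 (@haarAddCircle T hT),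
    ((zf : AddCircle T → ℂ) =ᵐ[@haarAddCircle T hT]
      fun x => fourier 1 x * ((f : Lp ℂ 2 (@haarAddCircle T hT)) : AddCircle T → ℂ) x) ∧
    ∀ h ∈ modelSpace T θ,
      @inner ℂ _ _ (zf - ((S f : modelSpace T θ) : Lp ℂ 2 (@haarAddCircle T hT))) h = 0

/-!
Applying `𝒫` to the identity for `A` gives
`𝒫A - 𝒫S_θAS_θ* = ⟪k₀, ·⟫ 𝒫ψ₁ + ⟪χ₁, ·⟫ k₀`, because `𝒫k₀ = k₀`: for `n ≥ 1` this is
`k₀ ∈ F₂`, and for `n = 0` the vector `v` is `k₀` itself. The invariance conditions make the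
commutator `𝒫S_θ - S_θ𝒫` map `F₁ ⊕ F₂ ⊇ Ran A` into `span {k₀}`, so
`A₂ - S_θA₂S_θ* - ⟪k₀, ·⟫ 𝒫ψ₁` has range in `span {k₀}`; by the Riesz representation theorem
such an operator is `k₀ ⊗ χ`.
-/

theorem ContinuousLinearMap.exists_eq_inner_smul_of_forall_mem_span_singleton
    {𝕜 E F : Type*} [RCLike 𝕜] [NormedAddCommGroup E] [InnerProductSpace 𝕜 E] [CompleteSpace E]
    [NormedAddCommGroup F] [InnerProductSpace 𝕜 F] (L : E →L[𝕜] F) (k : F)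
    (hL : ∀ h, L h ∈ Submodule.span 𝕜 {k}) : ∃ χ : E, ∀ h, L h = inner 𝕜 χ h • k := by
  rcases eq_or_ne k 0 with rfl | hk
  · exact ⟨0, fun h => by simpa using hL h⟩
  refine ⟨(InnerProductSpace.toDual 𝕜 E).symm ((‖k‖ ^ 2 : 𝕜)⁻¹ • (innerSL 𝕜 k ∘L L)),
    fun h => ?_⟩
  obtain ⟨c, hc⟩ := Submodule.mem_span_singleton.mp (hL h)
  have hk2 : (‖k‖ ^ 2 : 𝕜) ≠ 0 := by simpa using hk
  rw [InnerProductSpace.toDual_symm_apply]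
  simp only [_root_.smul_apply, ContinuousLinearMap.comp_apply, innerSL_apply_apply,
    smul_eq_mul]
  rw [← hc, inner_smul_right, inner_self_eq_norm_sq_to_K, mul_comm c, inv_mul_cancel_left₀ hk2]

theorem ContinuousLinearMap.exists_eq_inner_smul_add_inner_smul
    {𝕜 E F : Type*} [RCLike 𝕜] [NormedAddCommGroup E] [InnerProductSpace 𝕜 E] [CompleteSpace E]
    [NormedAddCommGroup F] [InnerProductSpace 𝕜 F] (D : E →L[𝕜] F) (k : E) (ψ k' : F)
    (hD : ∀ h, D h - inner 𝕜 k h • ψ ∈ Submodule.span 𝕜 {k'}) :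
    ∃ χ : E, ∀ h, D h = inner 𝕜 k h • ψ + inner 𝕜 χ h • k' := by
  obtain ⟨χ, hχ⟩ :=
    (D - (innerSL 𝕜 k).smulRight ψ).exists_eq_inner_smul_of_forall_mem_span_singleton k' hD
  exact ⟨χ, fun h => sub_eq_iff_eq_add'.mp (hχ h)⟩

open Submodule in
theorem LinearMap.commutator_apply_mem_span_singleton {R M : Type*} [CommRing R] [AddCommGroup M]
    [Module R M] (P S : M →ₗ[R] M) (F₁ F₂ : Submodule R M) (k v : M)
    (hPfix : ∀ x ∈ F₂ ⊔ span R {v}, P x = x) (hPker : ∀ x ∈ F₁, P x = 0) (hPk : P k = k)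
    (hSF₁ : ∀ x ∈ F₁, S x ∈ F₁ ⊔ span R {k}) (hSF₂ : ∀ x ∈ F₂, S x ∈ F₂ ⊔ span R {v})
    {x : M} (hx : x ∈ F₁ ⊔ F₂) : P (S x) - S (P x) ∈ span R {k} := by
  obtain ⟨x₁, hx₁, x₂, hx₂, rfl⟩ := mem_sup.mp hx
  obtain ⟨y, hy, z, hz, hyz⟩ := mem_sup.mp (hSF₁ x₁ hx₁)
  obtain ⟨c, rfl⟩ := mem_span_singleton.mp hz
  have hPSx₁ : P (S x₁) = c • k := by rw [← hyz, map_add, hPker y hy, map_smul, hPk, zero_add]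
  have hPSx₂ : P (S x₂) = S x₂ := hPfix _ (hSF₂ x₂ hx₂)
  have hPx₂ : P x₂ = x₂ := hPfix x₂ (mem_sup_left hx₂)
  rw [map_add, map_add, map_add, hPSx₁, hPSx₂, hPker x₁ hx₁, hPx₂, zero_add,
    add_sub_cancel_right]
  exact smul_mem _ c (mem_span_singleton_self k)

theorem coeFn_fourierBasis_zero (T : ℝ) [hT : Fact (0 < T)] :
    ((fourierBasis (0 : ℤ) : Lp ℂ 2 (@haarAddCircle T hT)) : AddCircle T → ℂ)
      =ᵐ[@haarAddCircle T hT] fun _ => 1 := by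
  rw [coe_fourierBasis]
  filter_upwards [coeFn_fourierLp 2 (0 : ℤ)] with x hx
  rw [hx, fourier_zero]

theorem fourierBasis_zero_mem_hardySpace (T : ℝ) [hT : Fact (0 < T)] :
    (fourierBasis (0 : ℤ) : Lp ℂ 2 (@haarAddCircle T hT)) ∈ hardySpace T := fun m hm => by
  rw [fourierBasis.repr_self]
  exact lp.single_apply_ne _ _ _ hm.ne

theorem mem_thetaH2_self (T : ℝ) [hT : Fact (0 < T)] (θ : Lp ℂ 2 (@haarAddCircle T hT)) :
    θ ∈ thetaH2 T θ :=
  ⟨_, fourierBasis_zero_mem_hardySpace T, by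
    filter_upwards [coeFn_fourierBasis_zero T] with x hx
    rw [hx, mul_one]⟩

theorem extDisk_zero (T : ℝ) [hT : Fact (0 < T)] (f : Lp ℂ 2 (@haarAddCircle T hT)) :
    extDisk T f 0 = fourierBasis.repr f 0 := by
  rw [extDisk, tsum_eq_single 0 fun m hm => by simp [zero_pow hm]]
  simp

/-- `k₀` is the reproducing kernel at `0`: its `θ`-component is orthogonal to `K_θ`. -/
theorem inner_eq_fourierBasis_repr_zero (T : ℝ) [hT : Fact (0 < T)]
    (θ : Lp ℂ 2 (@haarAddCircle T hT)) (k0 : modelSpace T θ)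
    (hk0 : ((k0 : Lp ℂ 2 (@haarAddCircle T hT)) : AddCircle T → ℂ) =ᵐ[@haarAddCircle T hT]
      fun x => 1 - conj (extDisk T θ 0) * (θ : AddCircle T → ℂ) x)
    (f : modelSpace T θ) :
    inner ℂ k0 f = fourierBasis.repr (f : Lp ℂ 2 (@haarAddCircle T hT)) 0 := by
  have hk0_eq : (k0 : Lp ℂ 2 (@haarAddCircle T hT))
      = fourierBasis (0 : ℤ) - conj (extDisk T θ 0) • θ := by
    apply Lp.ext
    filter_upwards [hk0, Lp.coeFn_sub (fourierBasis (0 : ℤ) : Lp ℂ 2 (@haarAddCircle T hT))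
        (conj (extDisk T θ 0) • θ), Lp.coeFn_smul (conj (extDisk T θ 0)) θ,
        coeFn_fourierBasis_zero T] with x h₁ h₂ h₃ h₄
    rw [h₁, h₂, Pi.sub_apply, h₃, Pi.smul_apply, h₄, smul_eq_mul]
  have hθf : inner ℂ θ (f : Lp ℂ 2 (@haarAddCircle T hT)) = 0 :=
    (Submodule.mem_orthogonal _ _).mp f.2.2 θ (mem_thetaH2_self T θ)
  rw [Submodule.coe_inner, hk0_eq, inner_sub_left, inner_smul_left, hθf, mul_zero, sub_zero,
    fourierBasis.repr_apply_apply]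

theorem stmt19_general (T : ℝ) [hT : Fact (0 < T)] (θ : Lp ℂ 2 (@haarAddCircle T hT))
    [CompleteSpace (modelSpace T θ)]
    (S : modelSpace T θ →L[ℂ] modelSpace T θ)
    (A : modelSpace T θ →L[ℂ] modelSpace T θ)
    (k0 : modelSpace T θ)
    (hk0 : ((k0 : Lp ℂ 2 (@haarAddCircle T hT)) : AddCircle T → ℂ) =ᵐ[@haarAddCircle T hT]
      fun x => 1 - conj (extDisk T θ 0) * (θ : AddCircle T → ℂ) x)
    (n : ℕ) (v : modelSpace T θ)
    (hv : ∀ f : modelSpace T θ,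
      @inner ℂ _ _ v f = iteratedDeriv n (extDisk T (f : Lp ℂ 2 (@haarAddCircle T hT))) 0)
    (ψ₁ χ₁ : modelSpace T θ)
    (hid : ∀ h : modelSpace T θ,
      A h - S (A (ContinuousLinearMap.adjoint S h)) =
        (@inner ℂ _ _ k0 h) • ψ₁ + (@inner ℂ _ _ χ₁ h) • k0)
    (F1 F2 : Submodule ℂ (modelSpace T θ))
    (hran : (LinearMap.range (A : modelSpace T θ →ₗ[ℂ] modelSpace T θ)).topologicalClosure
      = F1 ⊔ F2)
    (hSF1 : ∀ x ∈ F1, S x ∈ F1 ⊔ Submodule.span ℂ {k0})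
    (hSF2 : ∀ x ∈ F2, S x ∈ F2 ⊔ Submodule.span ℂ {v})
    (hk0F2 : 1 ≤ n → k0 ∈ F2)
    (P : modelSpace T θ →L[ℂ] modelSpace T θ)
    (hPfix : ∀ x ∈ F2 ⊔ Submodule.span ℂ {v}, P x = x)
    (hPker : ∀ x ∈ F1, P x = 0) :
    ∃ ψ χ : modelSpace T θ, ∀ h : modelSpace T θ,
      (P ∘L A) h - S ((P ∘L A) (ContinuousLinearMap.adjoint S h)) =
        (@inner ℂ _ _ k0 h) • ψ + (@inner ℂ _ _ χ h) • k0 := by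
  have hk0_mem : k0 ∈ F2 ⊔ Submodule.span ℂ {v} := by
    rcases n with _ | n
    · have hvk0 : v = k0 := ext_inner_right ℂ fun f => by
        rw [hv, iteratedDeriv_zero, extDisk_zero, inner_eq_fourierBasis_repr_zero T θ k0 hk0]
      exact Submodule.mem_sup_right (hvk0 ▸ Submodule.mem_span_singleton_self v)
    · exact Submodule.mem_sup_left (hk0F2 n.succ_pos)
  have hPk0 : P k0 = k0 := hPfix k0 hk0_mem
  have hA : ∀ x, A x ∈ F1 ⊔ F2 := fun x =>
    hran ▸ Submodule.le_topologicalClosure _ ⟨x, rfl⟩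
  obtain ⟨χ, hχ⟩ := ContinuousLinearMap.exists_eq_inner_smul_add_inner_smul
    (P ∘L A - S ∘L (P ∘L A) ∘L S.adjoint) k0 (P ψ₁) k0 fun h => by
    have hPid := congrArg P (hid h)
    rw [map_sub, map_add, map_smul, map_smul, hPk0] at hPid
    have hsplit : P (A h) - S (P (A (S.adjoint h))) - inner ℂ k0 h • P ψ₁
        = (P (S (A (S.adjoint h))) - S (P (A (S.adjoint h)))) + inner ℂ χ₁ h • k0 := by
      linear_combination (norm := module) hPid
    change P (A h) - S (P (A (S.adjoint h))) - _ ∈ _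
    rw [hsplit]
    exact add_mem (LinearMap.commutator_apply_mem_span_singleton P.toLinearMap S.toLinearMap
        F1 F2 k0 v hPfix hPker hPk0 hSF1 hSF2 (hA _))
      (Submodule.smul_mem _ _ (Submodule.mem_span_singleton_self k0))
  exact ⟨P ψ₁, χ, hχ⟩

/-- Splitting lemma: if `A` satisfies Sarason's identity, `closure(Ran A) = F₁ ⊕ F₂` with
`S_θ F₁ ⊆ F₁ + span{k₀}`, `S_θ F₂ ⊆ F₂ + span{v}` where `v = ∂̄ⁿk₀ ∉ closure(Ran A)` and
`k₀ ∈ F₂` when `n ≥ 1`, and `𝒫` is the projection onto `F₂ ⊕ span{v}` along `F₁`, then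
`A₂ = 𝒫A` also satisfies Sarason's identity. -/
theorem stmt19 (T : ℝ) [hT : Fact (0 < T)] (θ : Lp ℂ 2 (@haarAddCircle T hT))
    (hθ : IsInner T θ) [CompleteSpace (modelSpace T θ)]
    (S : modelSpace T θ →L[ℂ] modelSpace T θ) (hS : IsRestrictedShift T θ S)
    (A : modelSpace T θ →L[ℂ] modelSpace T θ)
    (k0 : modelSpace T θ)
    (hk0 : ((k0 : Lp ℂ 2 (@haarAddCircle T hT)) : AddCircle T → ℂ) =ᵐ[@haarAddCircle T hT]
      fun x => 1 - conj (extDisk T θ 0) * (θ : AddCircle T → ℂ) x)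
    (n : ℕ) (v : modelSpace T θ)
    (hv : ∀ f : modelSpace T θ,
      @inner ℂ _ _ v f = iteratedDeriv n (extDisk T (f : Lp ℂ 2 (@haarAddCircle T hT))) 0)
    (ψ₁ χ₁ : modelSpace T θ)
    (hid : ∀ h : modelSpace T θ,
      A h - S (A (ContinuousLinearMap.adjoint S h)) =
        (@inner ℂ _ _ k0 h) • ψ₁ + (@inner ℂ _ _ χ₁ h) • k0)
    (F1 F2 : Submodule ℂ (modelSpace T θ))
    (hF1c : IsClosed (F1 : Set (modelSpace T θ)))
    (hF2c : IsClosed (F2 : Set (modelSpace T θ)))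
    (hdisj : F1 ⊓ F2 = ⊥)
    (hran : (LinearMap.range (A : modelSpace T θ →ₗ[ℂ] modelSpace T θ)).topologicalClosure
      = F1 ⊔ F2)
    (hSF1 : ∀ x ∈ F1, S x ∈ F1 ⊔ Submodule.span ℂ {k0})
    (hSF2 : ∀ x ∈ F2, S x ∈ F2 ⊔ Submodule.span ℂ {v})
    (hvnot : v ∉
      (LinearMap.range (A : modelSpace T θ →ₗ[ℂ] modelSpace T θ)).topologicalClosure)
    (hk0F2 : 1 ≤ n → k0 ∈ F2)
    (P : modelSpace T θ →L[ℂ] modelSpace T θ)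
    (hPfix : ∀ x ∈ F2 ⊔ Submodule.span ℂ {v}, P x = x)
    (hPker : ∀ x ∈ F1, P x = 0)
    (hPrange : ∀ x : modelSpace T θ, P x ∈ F2 ⊔ Submodule.span ℂ {v}) :
    ∃ ψ χ : modelSpace T θ, ∀ h : modelSpace T θ,
      (P ∘L A) h - S ((P ∘L A) (ContinuousLinearMap.adjoint S h)) =
        (@inner ℂ _ _ k0 h) • ψ + (@inner ℂ _ _ χ h) • k0 :=
  stmt19_general T (hT := hT) θ S A k0 hk0 n v hv ψ₁ χ₁ hid F1 F2 hran hSF1 hSF2 hk0F2 P hPfix hPker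

end
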